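/- Let $A, B$ be disjoint finite subsets of $\{1,\dots,N\}$ with $|A| = |B| = m \geq 1$, and suppose $\min(A \cup B) \in B$, i.e., $b_1 < a_1$ where $A = \{a_1 < \dots\}$, $B = \{b_1 < \dots\}$. If $P \subseteq A \cup B$ with $|P| = m$ satisfies $P \succeq B$ and $(A \cup B) \setminus P \succeq A$ componentwise, then $\min(P) = b_1$ and $\min((A\cup B)\setminus P) = a_1$. -/
import Mathlib

lemma lowerSet_mem_iff {n : ℕ} (S : Finset (Fin n))
    (hl : ∀ i j : Fin n, i ≤ j → j ∈ S → i ∈ S) (j : Fin n) :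
    j ∈ S ↔ (j : ℕ) < S.card := by
  constructor
  · intro hj
    have hsub : Finset.Iic j ⊆ S := fun i hi => hl i j (Finset.mem_Iic.mp hi) hj
    have := Finset.card_le_card hsub
    rw [Fin.card_Iic] at this
    omega
  · intro hc
    by_contra hj
    have hsub : S ⊆ Finset.Iio j := fun i hi =>
      Finset.mem_Iio.mpr (lt_of_not_ge fun h => hj (hl j i h hi))
    have := Finset.card_le_card hsub
    rw [Fin.card_Iio] at this
    omega

lemma orderEmb_le_iff {N n : ℕ} (s : Finset (Fin N)) (hs : s.card = n) (x : Fin N) (j : Fin n) :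
    s.orderEmbOfFin hs j ≤ x ↔ (j : ℕ) < (s.filter (· ≤ x)).card := by
  set f := s.orderEmbOfFin hs with hf
  set S := Finset.univ.filter (fun i : Fin n => f i ≤ x) with hS
  have himg : s.filter (· ≤ x) = S.image f := by
    ext y
    simp only [Finset.mem_filter, Finset.mem_image, hS, Finset.mem_univ, true_and]
    constructor
    · rintro ⟨hy, hyx⟩
      have : y ∈ Set.range f := by rw [hf, Finset.range_orderEmbOfFin]; exact hy
      obtain ⟨i, rfl⟩ := this
      exact ⟨i, hyx, rfl⟩
    · rintro ⟨i, hix, rfl⟩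
      exact ⟨Finset.orderEmbOfFin_mem s hs i, hix⟩
  rw [himg, Finset.card_image_of_injective _ f.injective]
  have hlow : ∀ i j : Fin n, i ≤ j → j ∈ S → i ∈ S := fun i j hij hjS => by
    simp only [hS, Finset.mem_filter, Finset.mem_univ, true_and] at *
    exact le_trans (f.monotone hij) hjS
  have := lowerSet_mem_iff S hlow j
  simpa [hS] using this

/-- Componentwise order on equal-cardinality subsets: `A ⪯ B` iff `a_p ≤ b_p` for all `p`. -/
def finsetCwLe {N : ℕ} (A B : Finset (Fin N)) : Prop :=
  ∃ h : A.card = B.card, ∀ p : Fin A.card,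
    A.orderEmbOfFin rfl p ≤ B.orderEmbOfFin h.symm p

lemma orderEmbOfFin_zero' {N n : ℕ} (s : Finset (Fin N)) (hs : s.card = n) (h : 0 < n)
    (hne : s.Nonempty) : s.orderEmbOfFin hs ⟨0, h⟩ = s.min' hne := by
  subst hs
  exact Finset.orderEmbOfFin_zero rfl h

lemma orderEmb_cast {N k l : ℕ} (s : Finset (Fin N)) (hk : s.card = k) (hl : s.card = l)
    (i : Fin k) (j : Fin l) (h : (i : ℕ) = (j : ℕ)) :
    s.orderEmbOfFin hk i = s.orderEmbOfFin hl j := by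
  subst hk
  subst hl
  congr 1
  exact Fin.ext h

theorem stmt9 (N m : ℕ) (hm : 1 ≤ m) (A B : Finset (Fin N))
    (hA : A.card = m) (hB : B.card = m) (hdisj : Disjoint A B)
    (hmin : B.orderEmbOfFin hB ⟨0, hm⟩ < A.orderEmbOfFin hA ⟨0, hm⟩)
    (P : Finset (Fin N)) (hPsub : P ⊆ A ∪ B) (hP : P.card = m)
    (hPc : ((A ∪ B) \ P).card = m)
    (h1 : finsetCwLe B P)
    (h2 : finsetCwLe A ((A ∪ B) \ P)) :
    P.orderEmbOfFin hP ⟨0, hm⟩ = B.orderEmbOfFin hB ⟨0, hm⟩ ∧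
    ((A ∪ B) \ P).orderEmbOfFin hPc ⟨0, hm⟩ = A.orderEmbOfFin hA ⟨0, hm⟩ := by
  obtain ⟨hc1, hi1⟩ := h1
  obtain ⟨hc2, hi2⟩ := h2
  set C := (A ∪ B) \ P with hC
  have hAne : A.Nonempty := Finset.card_pos.mp (by omega)
  have hBne : B.Nonempty := Finset.card_pos.mp (by omega)
  have hPne : P.Nonempty := Finset.card_pos.mp (by omega)
  have hCne : C.Nonempty := Finset.card_pos.mp (by omega)
  set a1 := A.min' hAne with ha1
  set b1 := B.min' hBne with hb1
  rw [orderEmbOfFin_zero' B hB hm hBne, orderEmbOfFin_zero' A hA hm hAne] at hmin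
  -- b1 ≤ min P
  have hbP : b1 ≤ P.min' hPne := by
    have h0 : (0:ℕ) < B.card := by omega
    have := hi1 ⟨0, h0⟩
    rwa [orderEmbOfFin_zero' B rfl h0 hBne,
      orderEmbOfFin_zero' P hc1.symm h0 hPne] at this
  -- a1 ≤ min C
  have haC : a1 ≤ C.min' hCne := by
    have h0 : (0:ℕ) < A.card := by omega
    have := hi2 ⟨0, h0⟩
    rwa [orderEmbOfFin_zero' A rfl h0 hAne,
      orderEmbOfFin_zero' C hc2.symm h0 hCne] at this
  -- b1 ∈ P
  have hb1P : b1 ∈ P := by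
    by_contra h
    have hb1AB : b1 ∈ A ∪ B := Finset.mem_union_right _ (B.min'_mem hBne)
    have : b1 ∈ C := Finset.mem_sdiff.mpr ⟨hb1AB, h⟩
    have := C.min'_le b1 this
    exact absurd (le_trans haC this) (not_le.mpr hmin)
  -- a1 ∈ C
  have ha1C : a1 ∈ C := by
    by_contra h
    have ha1P : a1 ∈ P := by
      rcases Finset.mem_sdiff.not.mp h with h'
      have : a1 ∈ A ∪ B := Finset.mem_union_left _ (A.min'_mem hAne)
      tauto
    -- T = elements of A ∪ B that are ≤ a1 ; T ⊆ P
    set T := (A ∪ B).filter (· ≤ a1) with hT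
    have hTP : T ⊆ P := by
      intro y hy
      rw [hT, Finset.mem_filter] at hy
      by_contra hyP
      have hyC : y ∈ C := Finset.mem_sdiff.mpr ⟨hy.1, hyP⟩
      have h3 := C.min'_le y hyC
      have : y = a1 := le_antisymm hy.2 (le_trans haC h3)
      exact hyP (this ▸ ha1P)
    have hAf : A.filter (· ≤ a1) = {a1} := by
      ext y
      simp only [Finset.mem_filter, Finset.mem_singleton]
      constructor
      · rintro ⟨hyA, hya⟩
        exact le_antisymm hya (A.min'_le y hyA)
      · rintro rfl
        exact ⟨A.min'_mem hAne, le_refl _⟩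
    set k := (B.filter (· ≤ a1)).card with hk
    have hTcard : T.card = k + 1 := by
      rw [hT, Finset.filter_union, Finset.card_union_of_disjoint
        (Finset.disjoint_filter_filter hdisj), hAf]
      simp [hk, Nat.add_comm]
    have hkm : k < m := by
      have := Finset.card_le_card hTP
      omega
    -- P_k ≤ a1
    have hPk : P.orderEmbOfFin hP ⟨k, hkm⟩ ≤ a1 := by
      rw [orderEmb_le_iff]
      have hsub : T ⊆ P.filter (· ≤ a1) := by
        intro y hy
        have := hTP hy
        rw [hT, Finset.mem_filter] at hy
        exact Finset.mem_filter.mpr ⟨this, hy.2⟩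
      have := Finset.card_le_card hsub
      simp only
      omega
    -- a1 < B_k
    have hBk : a1 < B.orderEmbOfFin hB ⟨k, hkm⟩ := by
      by_contra h'
      have := (orderEmb_le_iff B hB a1 ⟨k, hkm⟩).mp (not_lt.mp h')
      simp only [← hk] at this
      omega
    have := hi1 ⟨k, by omega⟩
    rw [orderEmb_cast B rfl hB ⟨k, by omega⟩ ⟨k, hkm⟩ rfl,
      orderEmb_cast P hc1.symm hP ⟨k, by omega⟩ ⟨k, hkm⟩ rfl] at this
    exact absurd (lt_of_le_of_lt (le_trans this hPk) hBk) (lt_irrefl _)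
  constructor
  · rw [orderEmbOfFin_zero' P hP hm hPne, orderEmbOfFin_zero' B hB hm hBne]
    exact le_antisymm (P.min'_le b1 hb1P) hbP
  · rw [orderEmbOfFin_zero' C hPc hm hCne, orderEmbOfFin_zero' A hA hm hAne]
    exact le_antisymm (C.min'_le a1 ha1C) haC
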